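/- arXiv:math/0505253 — 4 statements merged into one kernel-verified Lean document; each statement's English description precedes it below -/
import Mathlib

section
/- Consider on ℝ⁶ with coordinates (x,y,z₁,z₂,ỹ,x̃) the metric g with nonzero components g(∂x,∂x̃)=g(∂y,∂ỹ)=g(∂z₁,∂z₁)=g(∂z₂,∂z₂)=1 and g(∂x,∂x)=-2(yz₁+f(y)z₂). Then, up to the usual ℤ₂ curvature symmetries, the nonzero components of the Riemann curvature tensor are R(∂x,∂y,∂y,∂x)=f''(y)z₂, R(∂x,∂y,∂z₁,∂x)=1, and R(∂x,∂y,∂z₂,∂x)=f'(y). -/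
open scoped BigOperators

namespace Stmt7

/-- The metric `g¹_{6,f}` on `ℝ⁶` in coordinates `(x, y, z₁, z₂, ỹ, x̃)`
(indices `0,…,5`). -/
def g (f : ℝ → ℝ) (p : Fin 6 → ℝ) : Fin 6 → Fin 6 → ℝ := fun i j =>
  if i = 0 ∧ j = 0 then -2 * (p 1 * p 2 + f (p 1) * p 3)
  else if (i = 0 ∧ j = 5) ∨ (i = 5 ∧ j = 0) then 1
  else if (i = 1 ∧ j = 4) ∨ (i = 4 ∧ j = 1) then 1
  else if (i = 2 ∧ j = 2) ∨ (i = 3 ∧ j = 3) then 1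
  else 0

/-- Partial derivative in the `i`-th coordinate direction. -/
noncomputable def pd (i : Fin 6) (h : (Fin 6 → ℝ) → ℝ) (p : Fin 6 → ℝ) : ℝ :=
  fderiv ℝ h p (Pi.single i 1)

/-- Curvature `R_{ijk}{}^l` of the connection with Christoffel symbols `Γ`. -/
noncomputable def Rup (Γ : (Fin 6 → ℝ) → Fin 6 → Fin 6 → Fin 6 → ℝ)
    (p : Fin 6 → ℝ) (i j k l : Fin 6) : ℝ :=
  pd i (fun q => Γ q j k l) p - pd j (fun q => Γ q i k l) p
    + (∑ n : Fin 6, Γ p i n l * Γ p j k n) - ∑ n : Fin 6, Γ p j n l * Γ p i k n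

/-- Fully lowered curvature tensor `R(∂ᵢ,∂ⱼ,∂ₖ,∂ₗ)`. -/
noncomputable def Rlow (f : ℝ → ℝ) (Γ : (Fin 6 → ℝ) → Fin 6 → Fin 6 → Fin 6 → ℝ)
    (p : Fin 6 → ℝ) (i j k l : Fin 6) : ℝ :=
  ∑ n : Fin 6, Rup Γ p i j k n * g f p n l

/-- The positions of the (possibly) nonzero curvature components: the orbits under the
`ℤ₂` curvature symmetries of `(0,1,1,0)`, `(0,1,2,0)`, `(0,1,3,0)`. -/
def S : Finset (Fin 6 × Fin 6 × Fin 6 × Fin 6) :=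
  {(0,1,1,0), (1,0,1,0), (0,1,0,1), (1,0,0,1),
   (0,1,2,0), (1,0,2,0), (0,1,0,2), (1,0,0,2),
   (2,0,0,1), (0,2,0,1), (2,0,1,0), (0,2,1,0),
   (0,1,3,0), (1,0,3,0), (0,1,0,3), (1,0,0,3),
   (3,0,0,1), (0,3,0,1), (3,0,1,0), (0,3,1,0)}

end Stmt7

section AuxStmt7

open scoped ContDiff

/-- Continuous linear projection onto the `k`-th coordinate. -/
abbrev AuxStmt7.prj (k : Fin 6) : (Fin 6 → ℝ) →L[ℝ] ℝ :=
  ContinuousLinearMap.proj (R := ℝ) (φ := fun _ : Fin 6 => ℝ) k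

namespace AuxStmt7

lemma hasF_x (k : Fin 6) (p : Fin 6 → ℝ) :
    HasFDerivAt (fun q : Fin 6 → ℝ => q k) (prj k) p := (prj k).hasFDerivAt

lemma hasF_comp (f : ℝ → ℝ) (hf : Differentiable ℝ f) (p : Fin 6 → ℝ) :
    HasFDerivAt (fun q : Fin 6 → ℝ => f (q 1)) (deriv f (p 1) • prj 1) p :=
  ((hf (p 1)).hasDerivAt).comp_hasFDerivAt p (hasF_x 1 p)

lemma pd_const (c : Fin 6) (a : ℝ) (p : Fin 6 → ℝ) : Stmt7.pd c (fun _ => a) p = 0 := by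
  simp [Stmt7.pd]

lemma pd_x1 (c : Fin 6) (p : Fin 6 → ℝ) :
    Stmt7.pd c (fun q => q 1) p = if c = 1 then 1 else 0 := by
  rw [Stmt7.pd, (hasF_x 1 p).fderiv]
  fin_cases c <;> simp (config := { decide := true }) [Pi.single_apply]

lemma pd_f (f : ℝ → ℝ) (hf : Differentiable ℝ f) (c : Fin 6) (p : Fin 6 → ℝ) :
    Stmt7.pd c (fun q => f (q 1)) p = if c = 1 then deriv f (p 1) else 0 := by
  rw [Stmt7.pd, (hasF_comp f hf p).fderiv]
  fin_cases c <;> simp (config := { decide := true }) [Pi.single_apply]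

lemma pd_u (f : ℝ → ℝ) (hf : Differentiable ℝ (deriv f)) (c : Fin 6) (p : Fin 6 → ℝ) :
    Stmt7.pd c (fun q => q 2 + deriv f (q 1) * q 3) p =
      if c = 1 then deriv (deriv f) (p 1) * p 3
      else if c = 2 then 1 else if c = 3 then deriv f (p 1) else 0 := by
  have h : HasFDerivAt (fun q : Fin 6 → ℝ => q 2 + deriv f (q 1) * q 3)
      (prj 2 + ((deriv f (p 1)) • prj 3 + (p 3) • (deriv (deriv f) (p 1) • prj 1))) p :=
    (hasF_x 2 p).add ((hasF_comp (deriv f) hf p).mul (hasF_x 3 p))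
  rw [Stmt7.pd, h.fderiv]
  fin_cases c <;> simp (config := { decide := true }) [Pi.single_apply] <;> ring

lemma pd_negf (f : ℝ → ℝ) (hf : Differentiable ℝ f) (c : Fin 6) (p : Fin 6 → ℝ) :
    Stmt7.pd c (fun q => -(f (q 1))) p = -(if c = 1 then deriv f (p 1) else 0) := by
  have h : HasFDerivAt (fun q : Fin 6 → ℝ => -(f (q 1))) (-(deriv f (p 1) • prj 1)) p :=
    (hasF_comp f hf p).neg
  rw [Stmt7.pd, h.fderiv]
  fin_cases c <;> simp (config := { decide := true }) [Pi.single_apply]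

lemma pd_negx1 (c : Fin 6) (p : Fin 6 → ℝ) :
    Stmt7.pd c (fun q => -(q 1)) p = -(if c = 1 then 1 else 0) := by
  have h : HasFDerivAt (fun q : Fin 6 → ℝ => -(q 1)) (-(prj 1)) p := (hasF_x 1 p).neg
  rw [Stmt7.pd, h.fderiv]
  fin_cases c <;> simp (config := { decide := true }) [Pi.single_apply]

lemma pd_negu (f : ℝ → ℝ) (hf : Differentiable ℝ (deriv f)) (c : Fin 6) (p : Fin 6 → ℝ) :
    Stmt7.pd c (fun q => -(q 2 + deriv f (q 1) * q 3)) p =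
      -(if c = 1 then deriv (deriv f) (p 1) * p 3
      else if c = 2 then 1 else if c = 3 then deriv f (p 1) else 0) := by
  have h : HasFDerivAt (fun q : Fin 6 → ℝ => -(q 2 + deriv f (q 1) * q 3))
      (-(prj 2 + ((deriv f (p 1)) • prj 3 + (p 3) • (deriv (deriv f) (p 1) • prj 1)))) p :=
    ((hasF_x 2 p).add ((hasF_comp (deriv f) hf p).mul (hasF_x 3 p))).neg
  rw [Stmt7.pd, h.fderiv]
  fin_cases c <;> simp (config := { decide := true }) [Pi.single_apply] <;> ring

lemma pd_g00 (f : ℝ → ℝ) (hf : Differentiable ℝ f) (c : Fin 6) (p : Fin 6 → ℝ) :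
    Stmt7.pd c (fun q => -2 * (q 1 * q 2 + f (q 1) * q 3)) p =
      if c = 1 then -2 * (p 2 + deriv f (p 1) * p 3)
      else if c = 2 then -2 * p 1 else if c = 3 then -2 * f (p 1) else 0 := by
  have h : HasFDerivAt (fun q : Fin 6 → ℝ => -2 * (q 1 * q 2 + f (q 1) * q 3))
      ((-2 : ℝ) • (((p 1) • prj 2 + (p 2) • prj 1) +
        ((f (p 1)) • prj 3 + (p 3) • (deriv f (p 1) • prj 1)))) p :=
    (((hasF_x 1 p).mul (hasF_x 2 p)).add ((hasF_comp f hf p).mul (hasF_x 3 p))).const_mul (-2)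
  rw [Stmt7.pd, h.fderiv]
  fin_cases c <;> simp (config := { decide := true }) [Pi.single_apply] <;> ring

lemma pd_g (f : ℝ → ℝ) (hf : Differentiable ℝ f) (c i j : Fin 6) (p : Fin 6 → ℝ) :
    Stmt7.pd c (fun q => Stmt7.g f q i j) p =
      if i = 0 ∧ j = 0 then
        (if c = 1 then -2 * (p 2 + deriv f (p 1) * p 3)
         else if c = 2 then -2 * p 1 else if c = 3 then -2 * f (p 1) else 0)
      else 0 := by
  by_cases h00 : i = 0 ∧ j = 0
  · have he : (fun q => Stmt7.g f q i j)
        = fun q : Fin 6 → ℝ => -2 * (q 1 * q 2 + f (q 1) * q 3) := by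
      funext q; simp [Stmt7.g, h00]
    rw [he, pd_g00 f hf, if_pos h00]
  · have he : (fun q => Stmt7.g f q i j) =
        fun _ : Fin 6 → ℝ => (if (i = 0 ∧ j = 5) ∨ (i = 5 ∧ j = 0) then (1:ℝ)
          else if (i = 1 ∧ j = 4) ∨ (i = 4 ∧ j = 1) then 1
          else if (i = 2 ∧ j = 2) ∨ (i = 3 ∧ j = 3) then 1 else 0) := by
      funext q; simp [Stmt7.g, h00]
    rw [he, pd_const, if_neg h00]

/-- Explicit Christoffel symbols of the Levi-Civita connection of `g`. -/
noncomputable def Γ' (f : ℝ → ℝ) (p : Fin 6 → ℝ) (i j l : Fin 6) : ℝ :=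
  if i = 0 ∧ j = 0 then
    (if l = 2 then p 1 else if l = 3 then f (p 1)
     else if l = 4 then p 2 + deriv f (p 1) * p 3 else 0)
  else if ((i = 0 ∧ j = 1) ∨ (i = 1 ∧ j = 0)) ∧ l = 5 then -(p 2 + deriv f (p 1) * p 3)
  else if ((i = 0 ∧ j = 2) ∨ (i = 2 ∧ j = 0)) ∧ l = 5 then -(p 1)
  else if ((i = 0 ∧ j = 3) ∨ (i = 3 ∧ j = 0)) ∧ l = 5 then -(f (p 1))
  else 0

/-- Partial derivatives of the explicit Christoffel symbols. -/
noncomputable def dΓ' (f : ℝ → ℝ) (p : Fin 6 → ℝ) (c i j l : Fin 6) : ℝ :=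
  if i = 0 ∧ j = 0 then
    (if l = 2 then (if c = 1 then 1 else 0)
     else if l = 3 then (if c = 1 then deriv f (p 1) else 0)
     else if l = 4 then (if c = 1 then deriv (deriv f) (p 1) * p 3
       else if c = 2 then 1 else if c = 3 then deriv f (p 1) else 0)
     else 0)
  else if ((i = 0 ∧ j = 1) ∨ (i = 1 ∧ j = 0)) ∧ l = 5 then
    -(if c = 1 then deriv (deriv f) (p 1) * p 3
      else if c = 2 then 1 else if c = 3 then deriv f (p 1) else 0)
  else if ((i = 0 ∧ j = 2) ∨ (i = 2 ∧ j = 0)) ∧ l = 5 then -(if c = 1 then 1 else 0)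
  else if ((i = 0 ∧ j = 3) ∨ (i = 3 ∧ j = 0)) ∧ l = 5 then -(if c = 1 then deriv f (p 1) else 0)
  else 0

lemma pd_Γ' (f : ℝ → ℝ) (hf : Differentiable ℝ f) (hf' : Differentiable ℝ (deriv f))
    (c i j l : Fin 6) (p : Fin 6 → ℝ) :
    Stmt7.pd c (fun q => Γ' f q i j l) p = dΓ' f p c i j l := by
  by_cases hA : i = 0 ∧ j = 0
  · by_cases h2 : l = 2
    · have he : (fun q => Γ' f q i j l) = fun q : Fin 6 → ℝ => q 1 := by
        funext q; simp [Γ', hA, h2]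
      rw [he, pd_x1]; simp [dΓ', hA, h2]
    · by_cases h3 : l = 3
      · have he : (fun q => Γ' f q i j l) = fun q : Fin 6 → ℝ => f (q 1) := by
          funext q; simp [Γ', hA, h2, h3]
        rw [he, pd_f f hf]; simp [dΓ', hA, h2, h3]
      · by_cases h4 : l = 4
        · have he : (fun q => Γ' f q i j l) =
              fun q : Fin 6 → ℝ => q 2 + deriv f (q 1) * q 3 := by
            funext q; simp [Γ', hA, h2, h3, h4]
          rw [he, pd_u f hf']; simp [dΓ', hA, h2, h3, h4]
        · have he : (fun q => Γ' f q i j l) = fun _ : Fin 6 → ℝ => (0:ℝ) := by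
            funext q; simp [Γ', hA, h2, h3, h4]
          rw [he, pd_const]; simp [dΓ', hA, h2, h3, h4]
  · by_cases hB : ((i = 0 ∧ j = 1) ∨ (i = 1 ∧ j = 0)) ∧ l = 5
    · have he : (fun q => Γ' f q i j l) =
          fun q : Fin 6 → ℝ => -(q 2 + deriv f (q 1) * q 3) := by
        funext q; simp [Γ', hA, hB.1, hB.2]
      rw [he, pd_negu f hf']; simp [dΓ', hA, hB.1, hB.2]
    · by_cases hC : ((i = 0 ∧ j = 2) ∨ (i = 2 ∧ j = 0)) ∧ l = 5
      · have hB' : ¬(i = 0 ∧ j = 1 ∨ i = 1 ∧ j = 0) := fun h => hB ⟨h, hC.2⟩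
        have he : (fun q => Γ' f q i j l) = fun q : Fin 6 → ℝ => -(q 1) := by
          funext q; simp [Γ', hA, hB', hC.1, hC.2]
        rw [he, pd_negx1]; simp [dΓ', hA, hB', hC.1, hC.2]
      · by_cases hD : ((i = 0 ∧ j = 3) ∨ (i = 3 ∧ j = 0)) ∧ l = 5
        · have hB' : ¬(i = 0 ∧ j = 1 ∨ i = 1 ∧ j = 0) := fun h => hB ⟨h, hD.2⟩
          have hC' : ¬(i = 0 ∧ j = 2 ∨ i = 2 ∧ j = 0) := fun h => hC ⟨h, hD.2⟩
          have he : (fun q => Γ' f q i j l) = fun q : Fin 6 → ℝ => -(f (q 1)) := by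
            funext q; simp [Γ', hA, hB', hC', hD.1, hD.2]
          rw [he, pd_negf f hf]; simp [dΓ', hA, hB', hC', hD.1, hD.2]
        · have he : (fun q => Γ' f q i j l) = fun _ : Fin 6 → ℝ => (0:ℝ) := by
            funext q; simp [Γ', hA, hB, hC, hD]
          rw [he, pd_const]; simp [dΓ', hA, hB, hC, hD]

set_option maxHeartbeats 2000000 in
/-- The Koszul identity determines the Christoffel symbols. -/
lemma Gamma_eq (f : ℝ → ℝ) (hf : Differentiable ℝ f)
    (Γ : (Fin 6 → ℝ) → Fin 6 → Fin 6 → Fin 6 → ℝ)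
    (hKoszul : ∀ p i j c, (∑ l : Fin 6, Γ p i j l * Stmt7.g f p l c) =
      (Stmt7.pd i (fun q => Stmt7.g f q j c) p + Stmt7.pd j (fun q => Stmt7.g f q i c) p
        - Stmt7.pd c (fun q => Stmt7.g f q i j) p) / 2) :
    ∀ p i j l, Γ p i j l = Γ' f p i j l := by
  intro p i j l
  have h0 := hKoszul p i j 0
  have h1 := hKoszul p i j 1
  have h2 := hKoszul p i j 2
  have h3 := hKoszul p i j 3
  have h4 := hKoszul p i j 4
  have h5 := hKoszul p i j 5
  simp only [Fin.sum_univ_six, pd_g f hf] at h0 h1 h2 h3 h4 h5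
  fin_cases i <;> fin_cases j <;>
    (simp (config := { decide := true }) [Stmt7.g] at h0 h1 h2 h3 h4 h5;
     simp only [h5, zero_mul, mul_zero, neg_zero, zero_add, neg_mul] at h0;
     fin_cases l <;> simp (config := { decide := true }) [Γ'] <;>
       linarith [h0, h1, h2, h3, h4, h5])

def w1 (i j : Fin 6) : ℤ := if i = 0 ∧ j = 1 then 1 else if i = 1 ∧ j = 0 then -1 else 0
def w2 (i j : Fin 6) : ℤ := if i = 0 ∧ j = 2 then 1 else if i = 2 ∧ j = 0 then -1 else 0
def w3 (i j : Fin 6) : ℤ := if i = 0 ∧ j = 3 then 1 else if i = 3 ∧ j = 0 then -1 else 0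
def eps1 (i j k l : Fin 6) : ℤ := -(w1 i j * w1 k l)
def eps2 (i j k l : Fin 6) : ℤ := -(w1 i j * w2 k l + w2 i j * w1 k l)
def eps3 (i j k l : Fin 6) : ℤ := -(w1 i j * w3 k l + w3 i j * w1 k l)

/-- Closed form of the curvature tensor. -/
noncomputable def Rexp (f : ℝ → ℝ) (p : Fin 6 → ℝ) (i j k l : Fin 6) : ℝ :=
  (eps1 i j k l : ℝ) * (deriv (deriv f) (p 1) * p 3) + (eps2 i j k l : ℝ)
    + (eps3 i j k l : ℝ) * deriv f (p 1)

lemma eps_diag : ∀ i k l : Fin 6,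
    eps1 i i k l = 0 ∧ eps2 i i k l = 0 ∧ eps3 i i k l = 0 := by decide

lemma eps_swap : ∀ i j k l : Fin 6,
    eps1 j i k l = -eps1 i j k l ∧ eps2 j i k l = -eps2 i j k l ∧
      eps3 j i k l = -eps3 i j k l := by decide

lemma eps_pair : ∀ i j k l : Fin 6,
    eps1 k l i j = eps1 i j k l ∧ eps2 k l i j = eps2 i j k l ∧
      eps3 k l i j = eps3 i j k l := by decide

lemma eps_S : ∀ i j k l : Fin 6, (i, j, k, l) ∉ Stmt7.S →
    eps1 i j k l = 0 ∧ eps2 i j k l = 0 ∧ eps3 i j k l = 0 := by decide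

lemma Rup_swap (Γ : (Fin 6 → ℝ) → Fin 6 → Fin 6 → Fin 6 → ℝ) (p : Fin 6 → ℝ)
    (i j k l : Fin 6) : Stmt7.Rup Γ p j i k l = -Stmt7.Rup Γ p i j k l := by
  simp only [Stmt7.Rup]; ring

lemma Rlow_swap (f : ℝ → ℝ) (Γ : (Fin 6 → ℝ) → Fin 6 → Fin 6 → Fin 6 → ℝ) (p : Fin 6 → ℝ)
    (i j k l : Fin 6) : Stmt7.Rlow f Γ p j i k l = -Stmt7.Rlow f Γ p i j k l := by
  simp only [Stmt7.Rlow]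
  rw [← Finset.sum_neg_distrib]
  exact Finset.sum_congr rfl fun n _ => by rw [Rup_swap]; ring

end AuxStmt7

end AuxStmt7

set_option maxHeartbeats 4000000 in
/-- For the metric `g¹_{6,f}` on `ℝ⁶`: curvature components. -/
theorem stmt_7 (f : ℝ → ℝ) (hf : ContDiff ℝ (⊤ : ℕ∞) f)
    (Γ : (Fin 6 → ℝ) → Fin 6 → Fin 6 → Fin 6 → ℝ)
    (hΓsym : ∀ p i j k, Γ p i j k = Γ p j i k)
    (hΓsmooth : ∀ i j k, ContDiff ℝ (⊤ : ℕ∞) (fun p => Γ p i j k))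
    (hKoszul : ∀ p i j c, (∑ l : Fin 6, Γ p i j l * Stmt7.g f p l c) =
      (Stmt7.pd i (fun q => Stmt7.g f q j c) p + Stmt7.pd j (fun q => Stmt7.g f q i c) p
        - Stmt7.pd c (fun q => Stmt7.g f q i j) p) / 2)
    (p : Fin 6 → ℝ) :
    Stmt7.Rlow f Γ p 0 1 1 0 = iteratedDeriv 2 f (p 1) * p 3 ∧
    Stmt7.Rlow f Γ p 0 1 2 0 = 1 ∧
    Stmt7.Rlow f Γ p 0 1 3 0 = deriv f (p 1) ∧
    (∀ i j k l, Stmt7.Rlow f Γ p i j k l = -Stmt7.Rlow f Γ p j i k l) ∧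
    (∀ i j k l, Stmt7.Rlow f Γ p i j k l = Stmt7.Rlow f Γ p k l i j) ∧
    (∀ i j k l, (i, j, k, l) ∉ Stmt7.S → Stmt7.Rlow f Γ p i j k l = 0) := by
  classical
  open AuxStmt7 in
  have hfd : Differentiable ℝ f := hf.differentiable (by simp)
  have hf' : Differentiable ℝ (deriv f) :=
    ((contDiff_infty_iff_deriv.mp (hf.of_le (by simp))).2).differentiable (by simp)
  have hΓeq : ∀ q i j l, Γ q i j l = AuxStmt7.Γ' f q i j l :=
    AuxStmt7.Gamma_eq f hfd Γ hKoszul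
  have hΓfun : ∀ j k l, (fun q => Γ q j k l) = fun q => AuxStmt7.Γ' f q j k l :=
    fun j k l => funext fun q => hΓeq q j k l
  have hR : ∀ i j k l, Stmt7.Rlow f Γ p i j k l =
      ∑ n : Fin 6, (AuxStmt7.dΓ' f p i j k n - AuxStmt7.dΓ' f p j i k n
        + (∑ m : Fin 6, AuxStmt7.Γ' f p i m n * AuxStmt7.Γ' f p j k m)
        - ∑ m : Fin 6, AuxStmt7.Γ' f p j m n * AuxStmt7.Γ' f p i k m)
          * Stmt7.g f p n l := by
    intro i j k l
    simp only [Stmt7.Rlow, Stmt7.Rup, hΓfun, hΓeq, AuxStmt7.pd_Γ' f hfd hf']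
  have key : ∀ i j k l : Fin 6, i < j →
      Stmt7.Rlow f Γ p i j k l = AuxStmt7.Rexp f p i j k l := by
    intro i j k l hij
    rw [hR]
    fin_cases i <;> fin_cases j <;> first
      | exact absurd hij (by decide)
      | (fin_cases k <;> fin_cases l <;>
          (simp (config := { decide := true })
            [Fin.sum_univ_six, AuxStmt7.Γ', AuxStmt7.dΓ', Stmt7.g, AuxStmt7.Rexp,
             AuxStmt7.eps1, AuxStmt7.eps2, AuxStmt7.eps3,
             AuxStmt7.w1, AuxStmt7.w2, AuxStmt7.w3]; try ring))
  have main : ∀ i j k l, Stmt7.Rlow f Γ p i j k l = AuxStmt7.Rexp f p i j k l := by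
    intro i j k l
    rcases lt_trichotomy i j with h | h | h
    · exact key i j k l h
    · subst h
      have h1 := AuxStmt7.Rlow_swap f Γ p i i k l
      have h2 := AuxStmt7.eps_diag i k l
      have hz : Stmt7.Rlow f Γ p i i k l = 0 := by linarith
      rw [hz]
      simp [AuxStmt7.Rexp, h2.1, h2.2.1, h2.2.2]
    · have h1 := AuxStmt7.Rlow_swap f Γ p j i k l
      have h2 := AuxStmt7.eps_swap j i k l
      rw [h1, key j i k l h]
      simp only [AuxStmt7.Rexp, h2.1, h2.2.1, h2.2.2]
      push_cast; ring
  have hit : iteratedDeriv 2 f (p 1) = deriv (deriv f) (p 1) := by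
    simp [iteratedDeriv_succ, iteratedDeriv_zero]
  refine ⟨?_, ?_, ?_, ?_, ?_, ?_⟩
  · rw [main, hit]
    simp (config := { decide := true })
      [AuxStmt7.Rexp, AuxStmt7.eps1, AuxStmt7.eps2, AuxStmt7.eps3,
       AuxStmt7.w1, AuxStmt7.w2, AuxStmt7.w3]
  · rw [main]
    simp (config := { decide := true })
      [AuxStmt7.Rexp, AuxStmt7.eps1, AuxStmt7.eps2, AuxStmt7.eps3,
       AuxStmt7.w1, AuxStmt7.w2, AuxStmt7.w3]
  · rw [main]
    simp (config := { decide := true })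
      [AuxStmt7.Rexp, AuxStmt7.eps1, AuxStmt7.eps2, AuxStmt7.eps3,
       AuxStmt7.w1, AuxStmt7.w2, AuxStmt7.w3]
  · intro i j k l
    have := AuxStmt7.Rlow_swap f Γ p i j k l
    linarith
  · intro i j k l
    have h2 := AuxStmt7.eps_pair i j k l
    rw [main, main]
    simp only [AuxStmt7.Rexp, h2.1, h2.2.1, h2.2.2]
  · intro i j k l hS
    have h2 := AuxStmt7.eps_S i j k l hS
    rw [main]
    simp [AuxStmt7.Rexp, h2.1, h2.2.1, h2.2.2]
end

section
/- Let f : ℝ → ℝ be smooth with f'' > 0. For the metric on ℝ⁶ in Theorem 3.2, given a point P, there exist ε₁, ε₂, and nonzero c₁, c₂, c₃ satisfying: f''(y)z₂ - 2ε₁ - 2ε₂f'(y) = 0, f'''(y)z₂ - 3ε₂f''(y) = 0, c₃²(1+f'(y)²)=1, c₃(1+f'(y)²)c₁²c₂=1, and c₃c₁²c₂²f''(y)=1, where (x,y,z₁,z₂,ỹ,x̃) are the coordinates of P. -/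
/-- The normalization equations (3.d)–(3.h) for `M¹_{6,f}` are solvable at every point:
if `f'' > 0`, then for every point `P = (x,y,z₁,z₂,ỹ,x̃) ∈ ℝ⁶` there exist `ε₁`, `ε₂` and
nonzero `c₁`, `c₂`, `c₃` with
`f''(y)z₂ - 2ε₁ - 2ε₂f'(y) = 0`, `f'''(y)z₂ - 3ε₂f''(y) = 0`, `c₃²(1+f'(y)²) = 1`,
`c₃(1+f'(y)²)c₁²c₂ = 1`, and `c₃c₁²c₂²f''(y) = 1`. -/
theorem stmt_8 (f : ℝ → ℝ) (hf : ContDiff ℝ (⊤ : ℕ∞) f)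
    (hconv : ∀ y : ℝ, iteratedDeriv 2 f y > 0) (P : Fin 6 → ℝ) :
    ∃ ε₁ ε₂ c₁ c₂ c₃ : ℝ, c₁ ≠ 0 ∧ c₂ ≠ 0 ∧ c₃ ≠ 0 ∧
      iteratedDeriv 2 f (P 1) * P 3 - 2 * ε₁ - 2 * ε₂ * deriv f (P 1) = 0 ∧
      iteratedDeriv 3 f (P 1) * P 3 - 3 * ε₂ * iteratedDeriv 2 f (P 1) = 0 ∧
      c₃ ^ 2 * (1 + (deriv f (P 1)) ^ 2) = 1 ∧
      c₃ * (1 + (deriv f (P 1)) ^ 2) * c₁ ^ 2 * c₂ = 1 ∧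
      c₃ * c₁ ^ 2 * c₂ ^ 2 * iteratedDeriv 2 f (P 1) = 1 := by
  set y := P 1
  set z := P 3
  set a := iteratedDeriv 2 f y with ha
  set b := iteratedDeriv 3 f y with hb
  set p := deriv f y with hp
  have hapos : 0 < a := hconv y
  have hgpos : 0 < 1 + p ^ 2 := by positivity
  set g := 1 + p ^ 2 with hg
  set s := Real.sqrt g with hs
  have hspos : 0 < s := Real.sqrt_pos.mpr hgpos
  have hs2 : s ^ 2 = g := Real.sq_sqrt hgpos.le
  refine ⟨(a * z - 2 * (b * z / (3 * a)) * p) / 2, b * z / (3 * a),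
    Real.sqrt (a / (g * s)), g / a, 1 / s, ?_, ?_, ?_, ?_, ?_, ?_, ?_, ?_⟩
  · have : 0 < a / (g * s) := by positivity
    exact ne_of_gt (Real.sqrt_pos.mpr this)
  · positivity
  · positivity
  · ring
  · field_simp; ring
  · rw [div_pow, hs2]; field_simp
  · have hc1 : Real.sqrt (a / (g * s)) ^ 2 = a / (g * s) := by
      exact Real.sq_sqrt (by positivity)
    rw [hc1]
    field_simp
    linear_combination (-1) * hs2
  · have hc1 : Real.sqrt (a / (g * s)) ^ 2 = a / (g * s) := by
      exact Real.sq_sqrt (by positivity)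
    rw [hc1]
    field_simp
    linear_combination (-1) * hs2
end

section
/- Let W be a 2-dimensional real vector space with basis Z₁, Z₂ and let c ∈ ℝ. Suppose φ : W → W is a linear isomorphism and a₁,a₂,a₃,a₄ are nonzero reals with φ(Z₁)=a₁Z₁, φ(c·Z₁+Z₂)=a₂(c'·Z₁+Z₂), φ(Z₂)=a₃Z₂, and φ(Z₁ - c·Z₂)=a₄(Z₁ - c'·Z₂) for some c' ∈ ℝ. Then c² = c'². -/
/-! Comparing `b`-coordinates of the images of the two mixed vectors gives `a₃ = a₂`, `a₄ = a₁`,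
`a₁ c = a₂ c'` and `a₂ c = a₁ c'`. Squaring the last two and adding them,
`(a₁² + a₂²) c² = (a₁² + a₂²) c'²`, and `a₁² + a₂² > 0` because `a₁ ≠ 0`. -/

theorem Module.Basis.coord_eq_of_smul_add_smul_eq {R M : Type*} [Semiring R] [AddCommMonoid M]
    [Module R M] (b : Module.Basis (Fin 2) R M) {x y x' y' : R}
    (h : x • b 0 + y • b 1 = x' • b 0 + y' • b 1) : x = x' ∧ y = y' := by
  have hcoord (i : Fin 2) := congrArg (fun v => b.repr v i) h
  simpa using And.intro (hcoord 0) (hcoord 1)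

theorem sq_eq_sq_of_mul_eq_mul_of_mul_eq_mul {K : Type*} [Field K] [LinearOrder K]
    [IsStrictOrderedRing K] {a a' c c' : K} (ha : a ≠ 0) (h : a * c = a' * c')
    (h' : a' * c = a * c') : c ^ 2 = c' ^ 2 := by
  have hpos : 0 < a ^ 2 + a' ^ 2 := by positivity
  refine mul_left_cancel₀ hpos.ne' ?_
  linear_combination (a * c + a' * c') * h + (a' * c + a * c') * h'

theorem stmt_9_general (W : Type*) [AddCommGroup W] [Module ℝ W]
    (b : Module.Basis (Fin 2) ℝ W) (φ : W ≃ₗ[ℝ] W) (c c' : ℝ)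
    (a₁ a₂ a₃ a₄ : ℝ) (h₁ : a₁ ≠ 0)
    (hZ₁ : φ (b 0) = a₁ • b 0)
    (hmix : φ (c • b 0 + b 1) = a₂ • (c' • b 0 + b 1))
    (hZ₂ : φ (b 1) = a₃ • b 1)
    (hmix' : φ (b 0 - c • b 1) = a₄ • (b 0 - c' • b 1)) :
    c ^ 2 = c' ^ 2 := by
  simp only [map_add, map_sub, map_smul, hZ₁, hZ₂] at hmix hmix'
  have hmix_coords : (c * a₁) • b 0 + a₃ • b 1 = (a₂ * c') • b 0 + a₂ • b 1 := by
    linear_combination (norm := module) hmix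
  have hmix'_coords : a₁ • b 0 + (-(c * a₃)) • b 1 = a₄ • b 0 + (-(a₄ * c')) • b 1 := by
    linear_combination (norm := module) hmix'
  obtain ⟨hc, ha₃⟩ := b.coord_eq_of_smul_add_smul_eq hmix_coords
  obtain ⟨ha₄, hc'⟩ := b.coord_eq_of_smul_add_smul_eq hmix'_coords
  exact sq_eq_sq_of_mul_eq_mul_of_mul_eq_mul (a' := a₂) h₁ (by linear_combination hc)
    (by linear_combination -hc' - c * ha₃ - c' * ha₄)

/-- Linear-algebraic core of the affine invariance of `α¹₆`: if `φ` rescales the four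
vectors `Z₁`, `c·Z₁+Z₂`, `Z₂`, `Z₁-c·Z₂` onto `Z₁`, `c'·Z₁+Z₂`, `Z₂`, `Z₁-c'·Z₂`
respectively (with nonzero factors), then `c² = c'²`. -/
theorem stmt_9 (W : Type*) [AddCommGroup W] [Module ℝ W]
    (b : Module.Basis (Fin 2) ℝ W) (φ : W ≃ₗ[ℝ] W) (c c' : ℝ)
    (a₁ a₂ a₃ a₄ : ℝ) (h₁ : a₁ ≠ 0) (h₂ : a₂ ≠ 0) (h₃ : a₃ ≠ 0) (h₄ : a₄ ≠ 0)
    (hZ₁ : φ (b 0) = a₁ • b 0)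
    (hmix : φ (c • b 0 + b 1) = a₂ • (c' • b 0 + b 1))
    (hZ₂ : φ (b 1) = a₃ • b 1)
    (hmix' : φ (b 0 - c • b 1) = a₄ • (b 0 - c' • b 1)) :
    c ^ 2 = c' ^ 2 :=
  stmt_9_general W b φ c c' a₁ a₂ a₃ a₄ h₁ hZ₁ hmix hZ₂ hmix'
end

section
/- Let γ : ℝ → ℝᵐ be a curve, γ = (x₁,…,x_m), and suppose the functions Γ_{ij}{}^k are smooth functions of (x₁,…,x_{k-1}) only, nonzero only when k > max(i,j). Define recursively x₁(t) = x₁⁰ + x₁¹t and, for k > 1, x_k(t) = x_k⁰ + x_k¹t - ∫₀ᵗ∫₀ˢ Σ_{i,j<k} ẋ_i(r)ẋ_j(r)Γ_{ij}{}^k(x₁(r),…,x_{k-1}(r)) dr ds. Then γ satisfies the geodesic equations ẍ_k + Σ_{i,j<k} ẋ_i ẋ_j Γ_{ij}{}^k = 0 for all k, with γ(0) = x⁰ and γ̇(0) = x¹, and γ is defined for all t ∈ ℝ. -/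
open scoped BigOperators

set_option linter.unusedVariables false

/-- Recursive solution of the geodesic system: `x_k` is defined by explicit double
integration from the coordinates of lower index. -/
noncomputable def solPW (m : ℕ) (Γ : Fin m → Fin m → Fin m → (Fin m → ℝ) → ℝ)
    (x0 x1 : Fin m → ℝ) : Fin m → ℝ → ℝ
  | k => fun t => x0 k + x1 k * t - ∫ s in (0:ℝ)..t, ∫ r in (0:ℝ)..s,
      ∑ i : Fin m, ∑ j : Fin m,
        (if h : i < k then deriv (solPW m Γ x0 x1 i) r else 0) *
        (if h : j < k then deriv (solPW m Γ x0 x1 j) r else 0) *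
        Γ i j k (fun l => if h : l < k then solPW m Γ x0 x1 l r else 0)
  termination_by k => k.val
  decreasing_by all_goals exact h

/-- The (truncated) quadratic forcing term in the `k`-th geodesic equation. -/
noncomputable def FPW (m : ℕ) (Γ : Fin m → Fin m → Fin m → (Fin m → ℝ) → ℝ)
    (x0 x1 : Fin m → ℝ) (k : Fin m) (r : ℝ) : ℝ :=
  ∑ i : Fin m, ∑ j : Fin m,
    (if h : i < k then deriv (solPW m Γ x0 x1 i) r else 0) *
    (if h : j < k then deriv (solPW m Γ x0 x1 j) r else 0) *
    Γ i j k (fun l => if h : l < k then solPW m Γ x0 x1 l r else 0)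

/-- Its first primitive. -/
noncomputable def GPW (m : ℕ) (Γ : Fin m → Fin m → Fin m → (Fin m → ℝ) → ℝ)
    (x0 x1 : Fin m → ℝ) (k : Fin m) (t : ℝ) : ℝ :=
  ∫ r in (0:ℝ)..t, FPW m Γ x0 x1 k r

theorem solPW_eq (m : ℕ) (Γ : Fin m → Fin m → Fin m → (Fin m → ℝ) → ℝ)
    (x0 x1 : Fin m → ℝ) (k : Fin m) :
    solPW m Γ x0 x1 k = fun t => x0 k + x1 k * t - ∫ s in (0:ℝ)..t, GPW m Γ x0 x1 k s := by
  funext t; rw [solPW]; rfl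

theorem solPW_main (m : ℕ) (Γ : Fin m → Fin m → Fin m → (Fin m → ℝ) → ℝ)
    (hsmooth : ∀ i j k, ContDiff ℝ (⊤ : ℕ∞) (Γ i j k))
    (x0 x1 : Fin m → ℝ) (k : Fin m) :
    ContDiff ℝ 2 (solPW m Γ x0 x1 k) ∧
      (∀ t, deriv (solPW m Γ x0 x1 k) t = x1 k - GPW m Γ x0 x1 k t) ∧
      (∀ t, deriv (deriv (solPW m Γ x0 x1 k)) t = - FPW m Γ x0 x1 k t) := by
  have IH : ∀ i : Fin m, i < k →
      ContDiff ℝ 2 (solPW m Γ x0 x1 i) ∧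
      (∀ t, deriv (solPW m Γ x0 x1 i) t = x1 i - GPW m Γ x0 x1 i t) ∧
      (∀ t, deriv (deriv (solPW m Γ x0 x1 i)) t = - FPW m Γ x0 x1 i t) :=
    fun i hi => solPW_main m Γ hsmooth x0 x1 i
  -- continuity of first derivatives of previously constructed coordinates
  have hcontd : ∀ i : Fin m, i < k → Continuous (deriv (solPW m Γ x0 x1 i)) := by
    intro i hi
    have h2 : ContDiff ℝ ((1 : WithTop ℕ∞) + 1) (solPW m Γ x0 x1 i) := by
      have := (IH i hi).1; norm_num at this ⊢; exact this
    exact ((contDiff_succ_iff_deriv.mp h2).2.2).continuous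
  -- continuity of the forcing term
  have hF : Continuous (FPW m Γ x0 x1 k) := by
    unfold FPW
    apply continuous_finset_sum; intro i _
    apply continuous_finset_sum; intro j _
    apply Continuous.mul
    apply Continuous.mul
    · by_cases h : i < k
      · simpa [h] using hcontd i h
      · simp only [h, dif_neg, not_false_iff]; exact continuous_const
    · by_cases h : j < k
      · simpa [h] using hcontd j h
      · simp only [h, dif_neg, not_false_iff]; exact continuous_const
    · refine (hsmooth i j k).continuous.comp (continuous_pi fun l => ?_)
      by_cases h : l < k
      · simpa [h] using (IH l h).1.continuous
      · simp only [h, dif_neg, not_false_iff]; exact continuous_const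
  have hGderiv : ∀ t, HasDerivAt (GPW m Γ x0 x1 k) (FPW m Γ x0 x1 k t) t := fun t =>
    (hF.integral_hasStrictDerivAt 0 t).hasDerivAt
  have hGdiff : Differentiable ℝ (GPW m Γ x0 x1 k) := fun t => (hGderiv t).differentiableAt
  have hGcont : Continuous (GPW m Γ x0 x1 k) := hGdiff.continuous
  have hsolderiv : ∀ t, HasDerivAt (solPW m Γ x0 x1 k) (x1 k - GPW m Γ x0 x1 k t) t := by
    intro t
    rw [solPW_eq]
    have hH : HasDerivAt (fun t => ∫ s in (0:ℝ)..t, GPW m Γ x0 x1 k s)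
        (GPW m Γ x0 x1 k t) t := (hGcont.integral_hasStrictDerivAt 0 t).hasDerivAt
    have := ((hasDerivAt_const t (x0 k)).fun_add ((hasDerivAt_id t).const_mul (x1 k))).fun_sub hH
    simpa [mul_comm] using this
  have hd1 : ∀ t, deriv (solPW m Γ x0 x1 k) t = x1 k - GPW m Γ x0 x1 k t := fun t =>
    (hsolderiv t).deriv
  have hderiv_eq : deriv (solPW m Γ x0 x1 k) = fun t => x1 k - GPW m Γ x0 x1 k t :=
    funext hd1
  have hd2at : ∀ t, HasDerivAt (deriv (solPW m Γ x0 x1 k)) (-(FPW m Γ x0 x1 k t)) t := by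
    intro t
    rw [hderiv_eq]
    simpa using (hasDerivAt_const t (x1 k)).fun_sub (hGderiv t)
  refine ⟨?_, hd1, fun t => (hd2at t).deriv⟩
  have h2 : ContDiff ℝ ((1 : WithTop ℕ∞) + 1) (solPW m Γ x0 x1 k) := by
    rw [contDiff_succ_iff_deriv]
    refine ⟨fun t => (hsolderiv t).differentiableAt, by simp, ?_⟩
    rw [contDiff_one_iff_deriv]
    refine ⟨fun t => (hd2at t).differentiableAt, ?_⟩
    have : deriv (deriv (solPW m Γ x0 x1 k)) = fun t => -(FPW m Γ x0 x1 k t) :=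
      funext fun t => (hd2at t).deriv
    rw [this]
    exact hF.neg
  norm_num at h2 ⊢
  exact h2
termination_by k.val
decreasing_by exact hi

/-- Geodesic completeness of generalized plane wave manifolds: if the Christoffel symbols
`Γ i j k` are smooth, vanish unless `k > max(i,j)`, and depend only on the coordinates
`x₁, …, x_{k-1}`, then for any initial data `x⁰`, `x¹` there is a curve
`γ : ℝ → ℝᵐ`, defined for all time, with `γ(0) = x⁰`, `γ̇(0) = x¹`, solving the geodesic
equations `ẍ_k + ∑_{i,j} ẋ_i ẋ_j Γ_{ij}{}^k(γ) = 0`. -/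
theorem stmt_18 (m : ℕ) (Γ : Fin m → Fin m → Fin m → (Fin m → ℝ) → ℝ)
    (hsmooth : ∀ i j k, ContDiff ℝ (⊤ : ℕ∞) (Γ i j k))
    (htri : ∀ i j k, ¬ (max i j < k) → Γ i j k = 0)
    (hdep : ∀ i j k, ∀ x y : Fin m → ℝ, (∀ l, l < k → x l = y l) → Γ i j k x = Γ i j k y)
    (x0 x1 : Fin m → ℝ) :
    ∃ γ : ℝ → (Fin m → ℝ),
      (∀ k, ContDiff ℝ 2 (fun t => γ t k)) ∧
      γ 0 = x0 ∧
      (∀ k, deriv (fun t => γ t k) 0 = x1 k) ∧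
      (∀ t : ℝ, ∀ k : Fin m,
        deriv (deriv (fun s => γ s k)) t +
          ∑ i : Fin m, ∑ j : Fin m,
            deriv (fun s => γ s i) t * deriv (fun s => γ s j) t * Γ i j k (γ t) = 0) := by
  refine ⟨fun t l => solPW m Γ x0 x1 l t, fun k => ?_, ?_, fun k => ?_, fun t k => ?_⟩
  · exact (solPW_main m Γ hsmooth x0 x1 k).1
  · funext l
    show solPW m Γ x0 x1 l 0 = x0 l
    rw [solPW_eq]
    simp
  · show deriv (solPW m Γ x0 x1 k) 0 = x1 k
    rw [(solPW_main m Γ hsmooth x0 x1 k).2.1 0]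
    simp [GPW]
  · show deriv (deriv (solPW m Γ x0 x1 k)) t +
        ∑ i : Fin m, ∑ j : Fin m,
          deriv (solPW m Γ x0 x1 i) t * deriv (solPW m Γ x0 x1 j) t *
            Γ i j k (fun l => solPW m Γ x0 x1 l t) = 0
    rw [(solPW_main m Γ hsmooth x0 x1 k).2.2 t]
    have hsum : ∑ i : Fin m, ∑ j : Fin m,
        deriv (solPW m Γ x0 x1 i) t * deriv (solPW m Γ x0 x1 j) t *
          Γ i j k (fun l => solPW m Γ x0 x1 l t) = FPW m Γ x0 x1 k t := by
      unfold FPW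
      refine Finset.sum_congr rfl fun i _ => Finset.sum_congr rfl fun j _ => ?_
      by_cases hij : i < k ∧ j < k
      · rw [dif_pos hij.1, dif_pos hij.2]
        congr 1
        exact hdep i j k _ _ (fun l hl => by simp [hl])
      · have h0 : Γ i j k = 0 := htri i j k fun hmax =>
          hij ⟨(max_lt_iff.mp hmax).1, (max_lt_iff.mp hmax).2⟩
        simp [h0]
    rw [hsum]
    ring
end
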